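/- The only infix-closed regular language whose minimal DFA has the same number of states as its minimal NFA is Σ*, and in that case both automata have exactly one state. -/

import Mathlib

/-!
Deleting the dead states of a DFA (those from which no accepting state is reachable) leaves an
NFA with a single start state (the start state is live: `[] ∈ L` by infix-closure) that accepts
the same language. If the minimal DFA is no larger than the minimal NFA, it therefore has no
dead state: every word `w` extends to some `w ++ y ∈ L`, and infix-closure gives `w ∈ L`.
So `L` is universal, and the one-state DFA accepting everything shows the minimal DFA has a
single state.
-/

namespace NFA

variable {α σ : Type*} (M : NFA α σ)

def restrict (S : Set σ) : NFA α S where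
  step s a := Subtype.val ⁻¹' M.step s a
  start := Subtype.val ⁻¹' M.start
  accept := Subtype.val ⁻¹' M.accept

variable {M}

theorem acceptsFrom_inter_of_forall_mem {S : Set σ}
    (hS : ∀ s x, x ∈ M.acceptsFrom {s} → s ∈ S) (T : Set σ) :
    M.acceptsFrom (T ∩ S) = M.acceptsFrom T := by
  ext x
  simp only [mem_acceptsFrom, mem_evalFrom_iff_exists (S := T ∩ _),
    mem_evalFrom_iff_exists (S := T)]
  constructor
  · rintro ⟨q, hq, t, ht, hqt⟩
    exact ⟨q, hq, t, ht.1, hqt⟩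
  · rintro ⟨q, hq, t, ht, hqt⟩
    exact ⟨q, hq, t, ⟨ht, hS t x ⟨q, hq, hqt⟩⟩, hqt⟩

theorem image_val_stepSet_restrict (S : Set σ) (T : Set S) (a : α) :
    Subtype.val '' (M.restrict S).stepSet T a = M.stepSet (Subtype.val '' T) a ∩ S := by
  ext q
  simp [mem_stepSet, restrict]

theorem acceptsFrom_restrict {S : Set σ} (hS : ∀ s x, x ∈ M.acceptsFrom {s} → s ∈ S)
    (T : Set S) : (M.restrict S).acceptsFrom T = M.acceptsFrom (Subtype.val '' T) := by
  ext x
  induction x generalizing T with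
  | nil => simp [restrict]
  | cons a x ih =>
    rw [cons_mem_acceptsFrom, cons_mem_acceptsFrom, ih, image_val_stepSet_restrict,
      acceptsFrom_inter_of_forall_mem hS]

theorem accepts_restrict {S : Set σ} (hS : ∀ s x, x ∈ M.acceptsFrom {s} → s ∈ S) :
    (M.restrict S).accepts = M.accepts := by
  rw [accepts_eq_acceptsFrom_start, acceptsFrom_restrict hS, accepts_eq_acceptsFrom_start]
  simp only [restrict, Subtype.image_preimage_coe, Set.inter_comm S]
  exact acceptsFrom_inter_of_forall_mem hS M.start

end NFA

namespace DFA

variable {α σ : Type*} (M : DFA α σ)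

def IsLive (s : σ) : Prop := ∃ x, x ∈ M.acceptsFrom s

def liveNFA : NFA α {s | M.IsLive s} := M.toNFA.restrict {s | M.IsLive s}

theorem toNFA_acceptsFrom_singleton (s : σ) : M.toNFA.acceptsFrom {s} = M.acceptsFrom s := by
  ext x
  simp [NFA.mem_acceptsFrom, mem_acceptsFrom]

theorem accepts_liveNFA : M.liveNFA.accepts = M.accepts := by
  rw [liveNFA, NFA.accepts_restrict, toNFA_correct]
  intro s x hx
  rw [toNFA_acceptsFrom_singleton] at hx
  exact ⟨x, hx⟩

theorem liveNFA_start (h : M.IsLive M.start) : M.liveNFA.start = {⟨M.start, h⟩} := by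
  ext s
  simp [liveNFA, NFA.restrict, Subtype.ext_iff]

theorem isLive_eval_iff_exists_append_mem {x : List α} :
    M.IsLive (M.eval x) ↔ ∃ y, x ++ y ∈ M.accepts := by
  simp [IsLive, mem_acceptsFrom, mem_accepts, eval, evalFrom_of_append]

theorem mem_accepts_of_forall_isLive (hpre : ∀ x y, x ++ y ∈ M.accepts → x ∈ M.accepts)
    (hlive : ∀ s, M.IsLive s) (x : List α) : x ∈ M.accepts :=
  let ⟨y, hy⟩ := M.isLive_eval_iff_exists_append_mem.1 (hlive (M.eval x))
  hpre x y hy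

end DFA

theorem Language.nil_mem_of_infix_closed {α : Type*} {L : Language α} (hL : L ≠ 0)
    (hinf : ∀ x y z, x ++ y ++ z ∈ L → y ∈ L) : [] ∈ L := by
  obtain ⟨w, hw⟩ : ∃ w, w ∈ L := by
    by_contra! h
    exact hL (Set.eq_empty_iff_forall_notMem.2 h)
  simpa using hinf [] [] w (by simpa using hw)


theorem infixClosed_dfa_eq_nfa_iff_univ_general {Γ : Type} (L : Language Γ) (hne : L ≠ 0)
    (hic : ∀ x y z : List Γ, x ++ y ++ z ∈ L → y ∈ L)
    {σD : Type} [Fintype σD] (D : DFA Γ σD) (hD : D.accepts = L)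
    (hDmin : ∀ (τ : Type) [Fintype τ] (D' : DFA Γ τ), D'.accepts = L →
      Fintype.card σD ≤ Fintype.card τ)
    {σN : Type} [Fintype σN]
    (hNmin : ∀ (τ : Type) [Fintype τ] (N' : NFA Γ τ) (p0 : τ), N'.start = {p0} →
      N'.accepts = L → Fintype.card σN ≤ Fintype.card τ)
    (heq : Fintype.card σD = Fintype.card σN) :
    (∀ w : List Γ, w ∈ L) ∧ Fintype.card σD = 1 := by
  classical
  subst hD
  have hstart : D.IsLive D.start := ⟨[], Language.nil_mem_of_infix_closed hne hic⟩
  have hlive : ∀ s, D.IsLive s := by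
    by_contra! ⟨s, hs⟩
    have hle := hNmin _ D.liveNFA ⟨D.start, hstart⟩ (D.liveNFA_start hstart) D.accepts_liveNFA
    have hlt : Fintype.card {s | D.IsLive s} < Fintype.card σD := by
      convert Fintype.card_subtype_lt (p := (· ∈ {s | D.IsLive s})) hs
    omega
  have huniv : ∀ w, w ∈ D.accepts :=
    D.mem_accepts_of_forall_isLive (fun x y h => by simpa using hic [] x y (by simpa using h)) hlive
  refine ⟨huniv, le_antisymm ?_ (Fintype.card_pos_iff.2 ⟨D.start⟩)⟩
  have hone : (⟨fun _ _ => (), (), Set.univ⟩ : DFA Γ Unit).accepts = D.accepts := by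
    ext w
    simp [DFA.mem_accepts, huniv w]
  simpa using hDmin Unit _ hone

/-- The only (nonempty) infix-closed regular language whose minimal DFA has the same
number of states as its minimal NFA is `Σ*`, and in that case both automata have
exactly one state. -/
theorem infixClosed_dfa_eq_nfa_iff_univ {Γ : Type} (L : Language Γ) (hne : L ≠ 0)
    (hic : ∀ x y z : List Γ, x ++ y ++ z ∈ L → y ∈ L)
    {σD : Type} [Fintype σD] (D : DFA Γ σD) (hD : D.accepts = L)
    (hDmin : ∀ (τ : Type) [Fintype τ] (D' : DFA Γ τ), D'.accepts = L →
      Fintype.card σD ≤ Fintype.card τ)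
    {σN : Type} [Fintype σN] (N : NFA Γ σN) (q0 : σN) (hq0 : N.start = {q0})
    (hN : N.accepts = L)
    (hNmin : ∀ (τ : Type) [Fintype τ] (N' : NFA Γ τ) (p0 : τ), N'.start = {p0} →
      N'.accepts = L → Fintype.card σN ≤ Fintype.card τ)
    (heq : Fintype.card σD = Fintype.card σN) :
    (∀ w : List Γ, w ∈ L) ∧ Fintype.card σD = 1 :=
  infixClosed_dfa_eq_nfa_iff_univ_general L hne hic D hD hDmin hNmin heq
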